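/- arXiv:1903.02270 — 2 statements merged into one kernel-verified Lean document; each statement's English description precedes it below -/
import Mathlib

section
/- Let s be nonzero, M symmetric positive definite, l = M s, H symmetric with H ⪯ M^{-1} (i.e., M^{-1} − H is positive semidefinite). Then the BFGS inverse update H_next = (I − s l^T/(s^T l)) H (I − l s^T/(s^T l)) + s s^T/(s^T l) also satisfies H_next ⪯ M^{-1}. -/
/-! With `V = I - s lᵀ / (sᵀ l)` the update reads `H ↦ V H Vᵀ + s sᵀ / (sᵀ l)`. For any symmetric
`B` with `B l = s` the same congruence gives `V B Vᵀ = B - s sᵀ / (sᵀ l)`, hence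
`B - H_next = V (B - H) Vᵀ`, and congruence preserves positive semidefiniteness. Applied to
`B = M⁻¹`, which sends `l = M s` back to `s`. -/

open Matrix

noncomputable def bfgsUpdate {n : ℕ} (H : Matrix (Fin n) (Fin n) ℝ)
    (s l : Fin n → ℝ) : Matrix (Fin n) (Fin n) ℝ :=
  (1 - (s ⬝ᵥ l)⁻¹ • Matrix.vecMulVec s l) * H * (1 - (s ⬝ᵥ l)⁻¹ • Matrix.vecMulVec l s)
    + (s ⬝ᵥ l)⁻¹ • Matrix.vecMulVec s s

section BFGSFactor

variable {K ι : Type*} [Field K] [Fintype ι] [DecidableEq ι]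

def bfgsFactor (s l : ι → K) : Matrix ι ι K :=
  1 - (s ⬝ᵥ l)⁻¹ • vecMulVec s l

lemma transpose_bfgsFactor (s l : ι → K) :
    (bfgsFactor s l)ᵀ = 1 - (s ⬝ᵥ l)⁻¹ • vecMulVec l s := by
  simp [bfgsFactor, transpose_sub, transpose_smul, transpose_vecMulVec]

lemma bfgsFactor_mul_mul_transpose {B : Matrix ι ι K} (hB : B.IsSymm) {s l : ι → K}
    (hBl : B *ᵥ l = s) :
    bfgsFactor s l * B * (bfgsFactor s l)ᵀ = B - (s ⬝ᵥ l)⁻¹ • vecMulVec s s := by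
  have hlB : l ᵥ* B = s := by rw [← hB.eq, vecMul_transpose, hBl]
  -- `c² (sᵀ l) = c` for `c = (sᵀ l)⁻¹`, also when `sᵀ l = 0` and so `c = 0`
  have hc : (s ⬝ᵥ l)⁻¹ * ((s ⬝ᵥ l)⁻¹ * (s ⬝ᵥ l)) = (s ⬝ᵥ l)⁻¹ := by
    rcases eq_or_ne (s ⬝ᵥ l) 0 with h | h <;> simp [h]
  rw [transpose_bfgsFactor, bfgsFactor, sub_mul, one_mul, smul_mul_assoc, vecMulVec_mul, hlB,
    mul_sub, mul_one, sub_mul, mul_smul_comm, mul_vecMulVec, hBl, smul_mul_assoc,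
    mul_smul_comm, vecMulVec_mul_vecMulVec, vecMulVec_smul, smul_smul, smul_smul, mul_assoc, hc]
  abel

end BFGSFactor

lemma bfgsUpdate_eq {n : ℕ} (H : Matrix (Fin n) (Fin n) ℝ) (s l : Fin n → ℝ) :
    bfgsUpdate H s l =
      bfgsFactor s l * H * (bfgsFactor s l)ᵀ + (s ⬝ᵥ l)⁻¹ • vecMulVec s s := by
  rw [transpose_bfgsFactor, bfgsUpdate, bfgsFactor]

lemma sub_bfgsUpdate_eq {n : ℕ} {B : Matrix (Fin n) (Fin n) ℝ} (hB : B.IsSymm)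
    (H : Matrix (Fin n) (Fin n) ℝ) {s l : Fin n → ℝ} (hBl : B *ᵥ l = s) :
    B - bfgsUpdate H s l = bfgsFactor s l * (B - H) * (bfgsFactor s l)ᵀ := by
  rw [mul_sub, sub_mul, bfgsFactor_mul_mul_transpose hB hBl, bfgsUpdate_eq]
  abel

lemma posSemidef_sub_bfgsUpdate {n : ℕ} {B H : Matrix (Fin n) (Fin n) ℝ} (hB : B.IsSymm)
    {s l : Fin n → ℝ} (hBl : B *ᵥ l = s) (hBH : (B - H).PosSemidef) :
    (B - bfgsUpdate H s l).PosSemidef := by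
  rw [sub_bfgsUpdate_eq hB H hBl, ← conjTranspose_eq_transpose_of_trivial]
  exact hBH.mul_mul_conjTranspose_same _

theorem stmt_4_general {n : ℕ} (M : Matrix (Fin n) (Fin n) ℝ) (hM : M.PosDef)
    (s : Fin n → ℝ) (l : Fin n → ℝ) (hl : l = M.mulVec s)
    (H : Matrix (Fin n) (Fin n) ℝ)
    (hHM : (M⁻¹ - H).PosSemidef) :
    (M⁻¹ - bfgsUpdate H s l).PosSemidef := by
  have hdet : IsUnit M.det := hM.isUnit.map detMonoidHom
  have hMinv_symm : M⁻¹.IsSymm := (isHermitian_iff_isSymm.mp hM.isHermitian).inv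
  refine posSemidef_sub_bfgsUpdate hMinv_symm ?_ hHM
  rw [hl, mulVec_mulVec, nonsing_inv_mul M hdet, one_mulVec]

theorem stmt_4 {n : ℕ} (M : Matrix (Fin n) (Fin n) ℝ) (hM : M.PosDef)
    (s : Fin n → ℝ) (hs : s ≠ 0) (l : Fin n → ℝ) (hl : l = M.mulVec s)
    (H : Matrix (Fin n) (Fin n) ℝ) (hH : H.IsSymm)
    (hHM : (M⁻¹ - H).PosSemidef) :
    (M⁻¹ - bfgsUpdate H s l).PosSemidef :=
  stmt_4_general M hM s l hl H hHM
end

section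
/- Let M be symmetric positive definite, s nonzero, l = M s, and H symmetric with H ⪯ M^{-1}. For any v ∈ R^n written as v = c·l + z with ⟨s,z⟩ = 0, the BFGS inverse update H_next satisfies v^T H_next v = c^2 l^T M^{-1} l + z^T H z. -/
open Matrix

/-!
Write `t = sᵀl`. Since `sᵀv = c t`, the right factor `I - l sᵀ / t` of the BFGS update sends
`v = c l + z` to `z`, and by transposition `vᵀ (I - s lᵀ / t) = zᵀ`. Hence the first term of
`vᵀ H_next v` is `zᵀ H z` and the rank-one term is `(sᵀv)² / t = c² t`. Finally
`lᵀ M⁻¹ l = lᵀ s = t` because `l = M s`, and `t > 0` since `M` is positive definite.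
-/

namespace Matrix

variable {ι K : Type*} [Fintype ι] [DecidableEq ι] [Field K]

theorem one_sub_inv_smul_vecMulVec_mulVec {s l z : ι → K} (c : K) (hsl : s ⬝ᵥ l ≠ 0)
    (hz : s ⬝ᵥ z = 0) :
    (1 - (s ⬝ᵥ l)⁻¹ • vecMulVec l s) *ᵥ (c • l + z) = z := by
  have hsv : s ⬝ᵥ (c • l + z) = (s ⬝ᵥ l) * c := by
    rw [dotProduct_add, dotProduct_smul, hz, smul_eq_mul, add_zero, mul_comm]
  rw [sub_mulVec, one_mulVec, smul_mulVec, vecMulVec_mulVec, op_smul_eq_smul, hsv, smul_smul,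
    inv_mul_cancel_left₀ hsl, add_sub_cancel_left]

theorem vecMul_one_sub_inv_smul_vecMulVec {s l z : ι → K} (c : K) (hsl : s ⬝ᵥ l ≠ 0)
    (hz : s ⬝ᵥ z = 0) :
    (c • l + z) ᵥ* (1 - (s ⬝ᵥ l)⁻¹ • vecMulVec s l) = z := by
  rw [← mulVec_transpose, transpose_sub, transpose_one, transpose_smul, transpose_vecMulVec,
    one_sub_inv_smul_vecMulVec_mulVec c hsl hz]

end Matrix

theorem dotProduct_bfgsUpdate_mulVec {n : ℕ} (H : Matrix (Fin n) (Fin n) ℝ) {s l z : Fin n → ℝ}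
    (c : ℝ) (hsl : s ⬝ᵥ l ≠ 0) (hz : s ⬝ᵥ z = 0) :
    (c • l + z) ⬝ᵥ bfgsUpdate H s l *ᵥ (c • l + z) = c ^ 2 * (s ⬝ᵥ l) + z ⬝ᵥ H *ᵥ z := by
  have hsv : s ⬝ᵥ (c • l + z) = c * (s ⬝ᵥ l) := by
    rw [dotProduct_add, dotProduct_smul, hz, smul_eq_mul, add_zero]
  rw [bfgsUpdate, add_mulVec, dotProduct_add, ← mulVec_mulVec, ← mulVec_mulVec,
    one_sub_inv_smul_vecMulVec_mulVec c hsl hz, dotProduct_mulVec,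
    vecMul_one_sub_inv_smul_vecMulVec c hsl hz, smul_mulVec, vecMulVec_mulVec, op_smul_eq_smul,
    dotProduct_smul, dotProduct_smul, dotProduct_comm _ s, hsv, smul_eq_mul, smul_eq_mul]
  field_simp
  ring

theorem stmt_19_general {n : ℕ} (M : Matrix (Fin n) (Fin n) ℝ) (hM : M.PosDef)
    (s : Fin n → ℝ) (hs : s ≠ 0) (l : Fin n → ℝ) (hl : l = M.mulVec s)
    (H : Matrix (Fin n) (Fin n) ℝ)
    (c : ℝ) (z : Fin n → ℝ) (hz : s ⬝ᵥ z = 0)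
    (v : Fin n → ℝ) (hv : v = c • l + z) :
    v ⬝ᵥ (bfgsUpdate H s l).mulVec v =
      c ^ 2 * (l ⬝ᵥ M⁻¹.mulVec l) + z ⬝ᵥ H.mulVec z := by
  subst hv hl
  have hsl : 0 < s ⬝ᵥ M *ᵥ s := hM.dotProduct_mulVec_pos hs
  let _ := hM.isUnit.invertible
  rw [dotProduct_bfgsUpdate_mulVec H c hsl.ne' hz, inv_mulVec_eq_vec rfl, dotProduct_comm]

theorem stmt_19 {n : ℕ} (M : Matrix (Fin n) (Fin n) ℝ) (hM : M.PosDef)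
    (s : Fin n → ℝ) (hs : s ≠ 0) (l : Fin n → ℝ) (hl : l = M.mulVec s)
    (H : Matrix (Fin n) (Fin n) ℝ) (hH : H.IsSymm)
    (hHM : (M⁻¹ - H).PosSemidef)
    (c : ℝ) (z : Fin n → ℝ) (hz : s ⬝ᵥ z = 0)
    (v : Fin n → ℝ) (hv : v = c • l + z) :
    v ⬝ᵥ (bfgsUpdate H s l).mulVec v =
      c ^ 2 * (l ⬝ᵥ M⁻¹.mulVec l) + z ⬝ᵥ H.mulVec z :=
  stmt_19_general M hM s hs l hl H c z hz v hv
end
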